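/- arXiv:1202.1778 — 6 statements merged into one kernel-verified Lean document; each statement's English description precedes it below -/
import Mathlib

section
/- For every natural number m, the limit as N → ∞ of ⟨e_N, ((a + a†)/√(2N))^(2m) e_N⟩ equals (1/2^m)·(2m choose m), i.e. the even moments of the rescaled position X/√N in the N-th number state converge to the even moments of the normalized arcsine law. -/
open MeasureTheory Filter

noncomputable def e (n : ℕ) : ℕ →₀ ℝ := Finsupp.single n 1

noncomputable def innerF (f g : ℕ →₀ ℝ) : ℝ := f.sum fun n c => c * g n

noncomputable def ann : (ℕ →₀ ℝ) →ₗ[ℝ] (ℕ →₀ ℝ) :=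
  Finsupp.lsum ℝ fun n => Real.sqrt n • (Finsupp.lsingle (n - 1) : ℝ →ₗ[ℝ] (ℕ →₀ ℝ))

noncomputable def cre : (ℕ →₀ ℝ) →ₗ[ℝ] (ℕ →₀ ℝ) :=
  Finsupp.lsum ℝ fun n => Real.sqrt (n + 1) • (Finsupp.lsingle (n + 1) : ℝ →ₗ[ℝ] (ℕ →₀ ℝ))

/-! ### Auxiliary lemmas -/

/-- Path counts: `Q k d` is the number of `±1`-walks of length `k` with displacement `d`. -/
def Q : ℕ → ℤ → ℕ
  | 0, d => if d = 0 then 1 else 0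
  | (k+1), d => Q k (d+1) + Q k (d-1)

theorem Q_spec : ∀ k : ℕ,
    (∀ u v : ℕ, u + v = k → Q k ((u:ℤ) - v) = k.choose u) ∧
    (∀ d : ℤ, (∀ u v : ℕ, u + v = k → d ≠ (u:ℤ) - v) → Q k d = 0) := by
  intro k
  induction k with
  | zero =>
    constructor
    · intro u v h
      have hu : u = 0 := by omega
      have hv : v = 0 := by omega
      subst hu; subst hv; simp [Q]
    · intro d hd
      have : d ≠ 0 := by simpa using hd 0 0 rfl
      simp [Q, this]
  | succ k ih =>
    obtain ⟨ih1, ih2⟩ := ih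
    have hvan : ∀ d : ℤ, (∀ u v : ℕ, u + v = k + 1 → d ≠ (u:ℤ) - v) → Q (k+1) d = 0 := by
      intro d hd
      show Q k (d+1) + Q k (d-1) = 0
      rw [ih2 (d+1) (fun u v huv he => hd u (v+1) (by omega) (by push_cast; omega)),
          ih2 (d-1) (fun u v huv he => hd (u+1) v (by omega) (by push_cast; omega))]
    refine ⟨?_, hvan⟩
    intro u v huv
    show Q k ((u:ℤ) - v + 1) + Q k ((u:ℤ) - v - 1) = (k+1).choose u
    rcases Nat.eq_zero_or_pos v with hv | hv
    · subst hv
      have hu : u = k + 1 := by omega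
      subst hu
      have h1 : Q k (((k+1:ℕ):ℤ) - ((0:ℕ):ℤ) + 1) = 0 := by
        apply ih2; intro u' v' h' he; omega
      have h2 : Q k (((k+1:ℕ):ℤ) - ((0:ℕ):ℤ) - 1) = k.choose k := by
        have h := ih1 k 0 (by omega)
        convert h using 2
        push_cast; ring
      rw [h1, h2]
      simp
    rcases Nat.eq_zero_or_pos u with hu | hu
    · subst hu
      have hv' : v = k + 1 := by omega
      subst hv'
      have h1 : Q k (((0:ℕ):ℤ) - ((k+1:ℕ):ℤ) + 1) = k.choose 0 := by
        have h := ih1 0 k (by omega)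
        convert h using 2
        push_cast; ring
      have h2 : Q k (((0:ℕ):ℤ) - ((k+1:ℕ):ℤ) - 1) = 0 := by
        apply ih2; intro u' v' h' he; omega
      rw [h1, h2]
      simp
    · have h1 : Q k ((u:ℤ) - v + 1) = k.choose u := by
        have h := ih1 u (v-1) (by omega)
        convert h using 2
        omega
      have h2 : Q k ((u:ℤ) - v - 1) = k.choose (u-1) := by
        have h := ih1 (u-1) v (by omega)
        convert h using 2
        omega
      rw [h1, h2]
      have h3 : (k+1).choose u = k.choose (u-1) + k.choose u := by
        simpa [Nat.succ_eq_add_one, show u-1+1=u by omega] using Nat.choose_succ_succ k (u-1)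
      omega

theorem Q_support {k : ℕ} {d : ℤ} (h : Q k d ≠ 0) : -(k:ℤ) ≤ d ∧ d ≤ k := by
  by_contra hc
  exact h ((Q_spec k).2 d (fun u v huv he => hc (by omega)))

theorem Q_central (m : ℕ) : Q (2*m) 0 = (2*m).choose m := by
  have := (Q_spec (2*m)).1 m m (by omega)
  simpa using this

theorem Q_zero' (d : ℤ) : Q 0 d = if d = 0 then 1 else 0 := rfl

theorem ann_apply (f : ℕ →₀ ℝ) (j : ℕ) : ann f j = Real.sqrt (j+1) * f (j+1) := by
  classical
  have h1 : ann f j = f.sum fun n c => Real.sqrt n * (Finsupp.single (n-1) c : ℕ →₀ ℝ) j := by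
    simp only [ann, Finsupp.lsum_apply, Finsupp.sum_apply, LinearMap.smul_apply,
      Finsupp.lsingle_apply, Finsupp.smul_apply, smul_eq_mul]
  rw [h1, Finsupp.sum]
  rw [Finset.sum_eq_single (j+1)]
  · simp [Finsupp.single_apply]
  · intro n _ hn
    rcases Nat.eq_zero_or_pos n with h | h
    · subst h; simp
    · have : n - 1 ≠ j := by omega
      simp [Finsupp.single_apply, this]
  · intro h
    simp [Finsupp.notMem_support_iff.mp h]

theorem cre_apply (f : ℕ →₀ ℝ) (j : ℕ) : cre f j = Real.sqrt j * f (j-1) := by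
  classical
  have h1 : cre f j = f.sum fun n c => Real.sqrt (n+1) * (Finsupp.single (n+1) c : ℕ →₀ ℝ) j := by
    simp only [cre, Finsupp.lsum_apply, Finsupp.sum_apply, LinearMap.smul_apply,
      Finsupp.lsingle_apply, Finsupp.smul_apply, smul_eq_mul]
  rw [h1, Finsupp.sum]
  rcases Nat.eq_zero_or_pos j with h | h
  · subst h
    simp only [Nat.cast_zero, Real.sqrt_zero, zero_mul]
    apply Finset.sum_eq_zero
    intro n _
    simp [Finsupp.single_apply]
  · rw [Finset.sum_eq_single (j-1)]
    · have hj : j - 1 + 1 = j := by omega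
      have hc' : ((j-1 : ℕ):ℝ) + 1 = (j:ℝ) := by
        exact_mod_cast congrArg (Nat.cast : ℕ → ℝ) hj
      have hc : Real.sqrt ((j-1 : ℕ)+1) = Real.sqrt j := by rw [hc']
      rw [hc]
      simp [hj, Finsupp.single_apply]
    · intro n _ hn
      have : n + 1 ≠ j := by omega
      simp [Finsupp.single_apply, this]
    · intro hh
      simp [Finsupp.notMem_support_iff.mp hh]

theorem step_apply (f : ℕ →₀ ℝ) (j : ℕ) :
    ((ann + cre) f) j = Real.sqrt (j+1) * f (j+1) + Real.sqrt j * f (j-1) := by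
  simp [LinearMap.add_apply, Finsupp.add_apply, ann_apply, cre_apply]

theorem T_bounds (m N : ℕ) (hN : 2*m ≤ N) :
    ∀ k, k ≤ 2*m → ∀ j : ℕ,
      (Q k ((j:ℤ) - N) : ℝ) * Real.sqrt ((N:ℝ) - 2*m) ^ k ≤ (((ann + cre) ^ k) (e N)) j ∧
      (((ann + cre) ^ k) (e N)) j ≤ (Q k ((j:ℤ) - N) : ℝ) * Real.sqrt ((N:ℝ) + 2*m + 1) ^ k := by
  set A := Real.sqrt ((N:ℝ) - 2*m) with hAdef
  set B := Real.sqrt ((N:ℝ) + 2*m + 1) with hBdef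
  have hA : 0 ≤ A := Real.sqrt_nonneg _
  have hB : 0 ≤ B := Real.sqrt_nonneg _
  intro k
  induction k with
  | zero =>
    intro _ j
    have h0 : (((ann + cre) ^ 0) (e N)) j = (e N) j := by simp
    rw [h0]
    by_cases hj : j = N
    · subst hj
      simp [e, Finsupp.single_apply, Q_zero']
    · have hd : ((j:ℤ) - N) ≠ 0 := by omega
      have hj' : N ≠ j := Ne.symm hj
      simp [e, Finsupp.single_apply, Q_zero', hj', hd]
  | succ k ih =>
    intro hk j
    have hk' : k ≤ 2*m := by omega
    set X : ℕ →₀ ℝ := ((ann + cre) ^ k) (e N) with hX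
    have hXnn : ∀ j' : ℕ, 0 ≤ X j' := fun j' => le_trans (by positivity) (ih hk' j').1
    have hXub : ∀ j' : ℕ, X j' ≤ (Q k ((j':ℤ) - N) : ℝ) * B ^ k := fun j' => (ih hk' j').2
    have hXlb : ∀ j' : ℕ, (Q k ((j':ℤ) - N) : ℝ) * A ^ k ≤ X j' := fun j' => (ih hk' j').1
    have hstep : (((ann + cre) ^ (k+1)) (e N)) j
        = Real.sqrt (j+1) * X (j+1) + Real.sqrt j * X (j-1) := by
      rw [pow_succ', Module.End.mul_apply, ← hX, step_apply]
    have hcast1 : ((j+1 : ℕ) : ℤ) - N = (j:ℤ) - N + 1 := by push_cast; ring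
    have t1l : (Q k ((j:ℤ) - N + 1) : ℝ) * A ^ (k+1) ≤ Real.sqrt (j+1) * X (j+1) := by
      by_cases hq : Q k ((j:ℤ) - N + 1) = 0
      · rw [hq]
        simp only [Nat.cast_zero, zero_mul]
        exact mul_nonneg (Real.sqrt_nonneg _) (hXnn _)
      · have hsupp := Q_support hq
        have hle : (N:ℝ) - 2*m ≤ (j:ℝ) + 1 := by
          have : (N:ℤ) - 2*m ≤ (j:ℤ) + 1 := by omega
          exact_mod_cast this
        have hsq : A ≤ Real.sqrt ((j:ℝ)+1) := Real.sqrt_le_sqrt hle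
        calc (Q k ((j:ℤ) - N + 1) : ℝ) * A ^ (k+1)
            = A * ((Q k ((j:ℤ) - N + 1) : ℝ) * A ^ k) := by ring
          _ ≤ A * X (j+1) := by
              apply mul_le_mul_of_nonneg_left _ hA
              rw [← hcast1] at *
              exact hXlb (j+1)
          _ ≤ Real.sqrt ((j:ℝ)+1) * X (j+1) :=
              mul_le_mul_of_nonneg_right hsq (hXnn (j+1))
    have t1u : Real.sqrt (j+1) * X (j+1) ≤ (Q k ((j:ℤ) - N + 1) : ℝ) * B ^ (k+1) := by
      by_cases hq : Q k ((j:ℤ) - N + 1) = 0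
      · have hub := hXub (j+1)
        rw [hcast1, hq] at hub
        simp only [Nat.cast_zero, zero_mul] at hub
        have : X (j+1) = 0 := le_antisymm hub (hXnn (j+1))
        rw [hq, this]
        simp
      · have hsupp := Q_support hq
        have hle : ((j:ℝ) + 1) ≤ (N:ℝ) + 2*m + 1 := by
          have : (j:ℤ) + 1 ≤ (N:ℤ) + 2*m + 1 := by omega
          exact_mod_cast this
        have hsq : Real.sqrt ((j:ℝ)+1) ≤ B := Real.sqrt_le_sqrt hle
        calc Real.sqrt ((j:ℝ)+1) * X (j+1)
            ≤ B * X (j+1) := mul_le_mul_of_nonneg_right hsq (hXnn (j+1))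
          _ ≤ B * ((Q k ((j:ℤ) - N + 1) : ℝ) * B ^ k) := by
              apply mul_le_mul_of_nonneg_left _ hB
              rw [← hcast1]
              exact hXub (j+1)
          _ = (Q k ((j:ℤ) - N + 1) : ℝ) * B ^ (k+1) := by ring
    have t2l : (Q k ((j:ℤ) - N - 1) : ℝ) * A ^ (k+1) ≤ Real.sqrt j * X (j-1) := by
      rcases Nat.eq_zero_or_pos j with hj0 | hj0
      · subst hj0
        have hq : Q k (-(N:ℤ) - 1) = 0 := by
          by_contra hc
          have := Q_support hc
          omega
        simp [hq]
      · have hcast2 : ((j-1 : ℕ) : ℤ) - N = (j:ℤ) - N - 1 := by omega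
        by_cases hq : Q k ((j:ℤ) - N - 1) = 0
        · rw [hq]
          simp only [Nat.cast_zero, zero_mul]
          exact mul_nonneg (Real.sqrt_nonneg _) (hXnn _)
        · have hsupp := Q_support hq
          have hle : (N:ℝ) - 2*m ≤ (j:ℝ) := by
            have : (N:ℤ) - 2*m ≤ (j:ℤ) := by omega
            exact_mod_cast this
          have hsq : A ≤ Real.sqrt (j:ℝ) := Real.sqrt_le_sqrt hle
          calc (Q k ((j:ℤ) - N - 1) : ℝ) * A ^ (k+1)
              = A * ((Q k ((j:ℤ) - N - 1) : ℝ) * A ^ k) := by ring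
            _ ≤ A * X (j-1) := by
                apply mul_le_mul_of_nonneg_left _ hA
                rw [← hcast2]
                exact hXlb (j-1)
            _ ≤ Real.sqrt (j:ℝ) * X (j-1) := mul_le_mul_of_nonneg_right hsq (hXnn (j-1))
    have t2u : Real.sqrt j * X (j-1) ≤ (Q k ((j:ℤ) - N - 1) : ℝ) * B ^ (k+1) := by
      rcases Nat.eq_zero_or_pos j with hj0 | hj0
      · subst hj0
        have hq : Q k (-(N:ℤ) - 1) = 0 := by
          by_contra hc
          have := Q_support hc
          omega
        simp [hq]
      · have hcast2 : ((j-1 : ℕ) : ℤ) - N = (j:ℤ) - N - 1 := by omega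
        by_cases hq : Q k ((j:ℤ) - N - 1) = 0
        · have hub := hXub (j-1)
          rw [hcast2, hq] at hub
          simp only [Nat.cast_zero, zero_mul] at hub
          have : X (j-1) = 0 := le_antisymm hub (hXnn (j-1))
          rw [hq, this]
          simp
        · have hsupp := Q_support hq
          have hle : (j:ℝ) ≤ (N:ℝ) + 2*m + 1 := by
            have : (j:ℤ) ≤ (N:ℤ) + 2*m + 1 := by omega
            exact_mod_cast this
          have hsq : Real.sqrt (j:ℝ) ≤ B := Real.sqrt_le_sqrt hle
          calc Real.sqrt (j:ℝ) * X (j-1)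
              ≤ B * X (j-1) := mul_le_mul_of_nonneg_right hsq (hXnn (j-1))
            _ ≤ B * ((Q k ((j:ℤ) - N - 1) : ℝ) * B ^ k) := by
                apply mul_le_mul_of_nonneg_left _ hB
                rw [← hcast2]
                exact hXub (j-1)
            _ = (Q k ((j:ℤ) - N - 1) : ℝ) * B ^ (k+1) := by ring
    have hQrec : (Q (k+1) ((j:ℤ) - N) : ℝ)
        = (Q k ((j:ℤ) - N + 1) : ℝ) + (Q k ((j:ℤ) - N - 1) : ℝ) := by
      show ((Q k ((j:ℤ) - N + 1) + Q k ((j:ℤ) - N - 1) : ℕ) : ℝ) = _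
      push_cast; ring
    constructor
    · rw [hstep, hQrec, add_mul]
      exact add_le_add t1l t2l
    · rw [hstep, hQrec, add_mul]
      exact add_le_add t1u t2u

theorem innerF_eN (N : ℕ) (g : ℕ →₀ ℝ) : innerF (e N) g = g N := by
  rw [innerF, e, Finsupp.sum_single_index] <;> simp

theorem value_eq (m N : ℕ) (hN : 1 ≤ N) :
    innerF (e N) ((((Real.sqrt (2 * N))⁻¹ • (ann + cre)) ^ (2 * m)) (e N))
      = ((2*(N:ℝ))^m)⁻¹ * (((ann + cre) ^ (2*m)) (e N)) N := by
  rw [smul_pow, LinearMap.smul_apply, innerF_eN, Finsupp.smul_apply, smul_eq_mul]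
  congr 1
  rw [inv_pow]
  congr 1
  rw [pow_mul, Real.sq_sqrt (by positivity)]

theorem lim_lower (m : ℕ) (C : ℝ) :
    Tendsto (fun N : ℕ => C * (((N:ℝ) - 2*m) / (2*N)) ^ m) atTop (nhds (C / 2 ^ m)) := by
  have h1 : Tendsto (fun N : ℕ => ((N:ℝ) - 2*m) / (2*N)) atTop (nhds (1/2)) := by
    have h0 : Tendsto (fun N : ℕ => (N:ℝ)⁻¹) atTop (nhds 0) :=
      tendsto_inv_atTop_zero.comp tendsto_natCast_atTop_atTop
    have h2 : Tendsto (fun N : ℕ => 1/2 - (m:ℝ) * (N:ℝ)⁻¹) atTop (nhds (1/2)) := by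
      have := (tendsto_const_nhds (x := (1/2:ℝ)) (f := atTop)).sub
        ((h0.const_mul (m:ℝ)))
      simpa using this
    apply h2.congr'
    filter_upwards [eventually_ge_atTop 1] with N hN
    have hN0 : (N:ℝ) ≠ 0 := by positivity
    field_simp
  have := (h1.pow m).const_mul C
  convert this using 2
  rw [div_eq_mul_inv, one_div, inv_pow]

theorem lim_upper (m : ℕ) (C : ℝ) :
    Tendsto (fun N : ℕ => C * (((N:ℝ) + 2*m + 1) / (2*N)) ^ m) atTop (nhds (C / 2 ^ m)) := by
  have h1 : Tendsto (fun N : ℕ => ((N:ℝ) + 2*m + 1) / (2*N)) atTop (nhds (1/2)) := by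
    have h0 : Tendsto (fun N : ℕ => (N:ℝ)⁻¹) atTop (nhds 0) :=
      tendsto_inv_atTop_zero.comp tendsto_natCast_atTop_atTop
    have h2 : Tendsto (fun N : ℕ => 1/2 + ((m:ℝ) + 1/2) * (N:ℝ)⁻¹) atTop (nhds (1/2)) := by
      have := (tendsto_const_nhds (x := (1/2:ℝ)) (f := atTop)).add
        ((h0.const_mul ((m:ℝ) + 1/2)))
      simpa using this
    apply h2.congr'
    filter_upwards [eventually_ge_atTop 1] with N hN
    have hN0 : (N:ℝ) ≠ 0 := by positivity
    field_simp
    ring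
  have := (h1.pow m).const_mul C
  convert this using 2
  rw [div_eq_mul_inv, one_div, inv_pow]

/-- The even moments of the rescaled position `X/√N` in the `N`-th number state
converge to the even moments of the normalized arcsine law. -/
theorem arcsine_even_moments_limit (m : ℕ) :
    Tendsto
      (fun N : ℕ =>
        innerF (e N) ((((Real.sqrt (2 * N))⁻¹ • (ann + cre)) ^ (2 * m)) (e N)))
      atTop (nhds ((Nat.choose (2 * m) m : ℝ) / 2 ^ m)) := by
  set C : ℝ := ((2*m).choose m : ℝ) with hC
  apply tendsto_of_tendsto_of_tendsto_of_le_of_le' (lim_lower m C) (lim_upper m C)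
  · filter_upwards [eventually_ge_atTop (2*m+1)] with N hN
    have hN1 : 1 ≤ N := by omega
    have hN2 : 2*m ≤ N := by omega
    rw [value_eq m N hN1]
    have hb := (T_bounds m N hN2 (2*m) le_rfl N).1
    have hQ : ((Q (2*m) ((N:ℤ) - N)) : ℝ) = C := by
      rw [show (N:ℤ) - N = 0 by ring, Q_central]
    rw [hQ] at hb
    have hA : Real.sqrt ((N:ℝ) - 2*m) ^ (2*m) = ((N:ℝ) - 2*m) ^ m := by
      rw [pow_mul, Real.sq_sqrt]
      have h1 : (2*m : ℤ) ≤ N := by exact_mod_cast hN2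
      have h2 : (2*(m:ℝ)) ≤ N := by exact_mod_cast h1
      linarith
    rw [hA] at hb
    calc C * (((N:ℝ) - 2*m) / (2*N)) ^ m
        = ((2*(N:ℝ))^m)⁻¹ * (C * ((N:ℝ) - 2*m)^m) := by
          rw [div_pow]; ring
      _ ≤ ((2*(N:ℝ))^m)⁻¹ * (((ann + cre) ^ (2*m)) (e N)) N :=
          mul_le_mul_of_nonneg_left hb (by positivity)
  · filter_upwards [eventually_ge_atTop (2*m+1)] with N hN
    have hN1 : 1 ≤ N := by omega
    have hN2 : 2*m ≤ N := by omega
    rw [value_eq m N hN1]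
    have hb := (T_bounds m N hN2 (2*m) le_rfl N).2
    have hQ : ((Q (2*m) ((N:ℤ) - N)) : ℝ) = C := by
      rw [show (N:ℤ) - N = 0 by ring, Q_central]
    rw [hQ] at hb
    have hB : Real.sqrt ((N:ℝ) + 2*m + 1) ^ (2*m) = ((N:ℝ) + 2*m + 1) ^ m := by
      rw [pow_mul, Real.sq_sqrt (by positivity)]
    rw [hB] at hb
    calc ((2*(N:ℝ))^m)⁻¹ * (((ann + cre) ^ (2*m)) (e N)) N
        ≤ ((2*(N:ℝ))^m)⁻¹ * (C * ((N:ℝ) + 2*m + 1)^m) :=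
          mul_le_mul_of_nonneg_left hb (by positivity)
      _ = C * (((N:ℝ) + 2*m + 1) / (2*N)) ^ m := by
          rw [div_pow]; ring
end

section
/- Let m be a natural number and λ : Fin (2m) → Bool a balanced word (exactly m indices map to true and m to false). Then for every N ≥ m, N·(N−1)···(N−m+1) ≤ ⟨e_N, a^λ e_N⟩ ≤ (N+1)·(N+2)···(N+m). -/
open MeasureTheory Filter

noncomputable def wordOp {k : ℕ} (lam : Fin k → Bool) : (ℕ →₀ ℝ) →ₗ[ℝ] (ℕ →₀ ℝ) :=
  (List.ofFn fun i => if lam i then cre else ann).foldr (· ∘ₗ ·) LinearMap.id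

/-! ### Auxiliary machinery -/

/-- final level after applying the word (rightmost first) starting at level `n` -/
def lvl (l : List Bool) (n : ℕ) : ℕ := n + l.count true - l.count false

/-- coefficient picked up while applying the word to `e n` -/
noncomputable def coeff : List Bool → ℕ → ℝ
  | [], _ => 1
  | (b :: l), n =>
      (if b then Real.sqrt (lvl l n + 1) else Real.sqrt (lvl l n)) * coeff l n

lemma coeff_nonneg (l : List Bool) (n : ℕ) : 0 ≤ coeff l n := by
  induction l with
  | nil => exact zero_le_one
  | cons b l ih =>
      exact mul_nonneg (by split <;> exact Real.sqrt_nonneg _) ih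

lemma lvl_nil (n : ℕ) : lvl [] n = n := by simp [lvl]

lemma lvl_cons_true (l : List Bool) (n : ℕ) (h : l.count false ≤ n + l.count true) :
    lvl (true :: l) n = lvl l n + 1 := by
  simp [lvl, List.count_cons]
  omega

lemma lvl_cons_false (l : List Bool) (n : ℕ) :
    lvl (false :: l) n = lvl l n - 1 := by
  simp [lvl, List.count_cons]
  omega

lemma lvl_middle (x y : List Bool) (a b : Bool) (n : ℕ) (hab : a ≠ b) :
    lvl (x ++ a :: b :: y) n = lvl (x ++ y) n := by
  rcases hab.lt_or_gt with h | h <;>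
  · simp only [lvl, List.count_append, List.count_cons]
    cases a <;> cases b <;> simp_all <;> omega

lemma coeff_cons (b : Bool) (l : List Bool) (n : ℕ) :
    coeff (b :: l) n =
      (if b then Real.sqrt (lvl l n + 1) else Real.sqrt (lvl l n)) * coeff l n := rfl

/-- peak cancellation -/
lemma coeff_peak (x y : List Bool) (n : ℕ)
    (hy : y.count false ≤ n + y.count true) :
    coeff (x ++ false :: true :: y) n = ((lvl y n : ℝ) + 1) * coeff (x ++ y) n := by
  induction x with
  | nil =>
      simp only [List.nil_append, coeff_cons, Bool.false_eq_true, if_false, if_true]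
      rw [lvl_cons_true _ _ hy]
      push_cast
      rw [← mul_assoc, Real.mul_self_sqrt (by positivity)]
  | cons b x ih =>
      simp only [List.cons_append, coeff_cons, ih]
      rw [lvl_middle x y false true n (by simp)]
      ring

/-- valley cancellation -/
lemma coeff_valley (x y : List Bool) (n : ℕ) :
    coeff (x ++ true :: false :: y) n = (lvl y n : ℝ) * coeff (x ++ y) n := by
  induction x with
  | nil =>
      simp only [List.nil_append, coeff_cons, Bool.false_eq_true, if_false, if_true]
      rw [lvl_cons_false]
      rcases Nat.eq_zero_or_pos (lvl y n) with h | h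
      · simp [h]
      · have h1 : ((lvl y n - 1 : ℕ) : ℝ) + 1 = (lvl y n : ℝ) := by
          rw [Nat.cast_sub h]; push_cast; ring
        rw [h1, ← mul_assoc, Real.mul_self_sqrt (Nat.cast_nonneg _)]
  | cons b x ih =>
      simp only [List.cons_append, coeff_cons, ih]
      rw [lvl_middle x y true false n (by simp)]
      ring

lemma count_replicate_true (k : ℕ) :
    (List.replicate k true).count true = k ∧ (List.replicate k true).count false = 0 := by
  simp [List.count_replicate]

lemma lvl_replicate_true (k n : ℕ) : lvl (List.replicate k true) n = n + k := by
  simp [lvl, List.count_replicate]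

lemma lvl_replicate_false (k n : ℕ) : lvl (List.replicate k false) n = n - k := by
  simp [lvl, List.count_replicate]

/-- value on the "valley-shaped" word: falling factorial -/
lemma coeff_valley_word (k N : ℕ) (hk : k ≤ N) :
    coeff (List.replicate k true ++ List.replicate k false) N
      = ∏ i ∈ Finset.range k, ((N : ℝ) - i) := by
  induction k with
  | zero => simp [coeff]
  | succ k ih =>
      have hrw : List.replicate (k+1) true ++ List.replicate (k+1) false
          = List.replicate k true ++ true :: false :: List.replicate k false := by
        rw [List.replicate_succ' (n := k) (a := true), List.replicate_succ]
        simp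
      rw [hrw, coeff_valley, ih (by omega), lvl_replicate_false,
        Finset.prod_range_succ]
      have : ((N - k : ℕ) : ℝ) = (N : ℝ) - k := by
        have : k ≤ N := by omega
        push_cast [this]; ring
      rw [this]; ring

/-- value on the "peak-shaped" word: rising factorial -/
lemma coeff_peak_word (k N : ℕ) :
    coeff (List.replicate k false ++ List.replicate k true) N
      = ∏ i ∈ Finset.range k, ((N : ℝ) + 1 + i) := by
  induction k with
  | zero => simp [coeff]
  | succ k ih =>
      have hrw : List.replicate (k+1) false ++ List.replicate (k+1) true
          = List.replicate k false ++ false :: true :: List.replicate k true := by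
        rw [List.replicate_succ' (n := k) (a := false), List.replicate_succ]
        simp
      rw [hrw, coeff_peak _ _ _ (by simp [List.count_replicate]), ih,
        lvl_replicate_true, Finset.prod_range_succ]
      push_cast
      ring

/-- every word either has an adjacent `[false, true]` pair or is
`true^a ++ false^b` -/
lemma peak_or (l : List Bool) :
    (∃ x y, l = x ++ false :: true :: y) ∨
      (∃ a b, l = List.replicate a true ++ List.replicate b false) := by
  induction l with
  | nil => exact Or.inr ⟨0, 0, rfl⟩
  | cons c l ih =>
      rcases ih with ⟨x, y, rfl⟩ | ⟨a, b, rfl⟩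
      · exact Or.inl ⟨c :: x, y, rfl⟩
      · cases c with
        | true =>
            exact Or.inr ⟨a + 1, b, by rw [List.replicate_succ]; simp⟩
        | false =>
            cases a with
            | zero =>
                exact Or.inr ⟨0, b + 1, by rw [List.replicate_succ]; simp⟩
            | succ a =>
                refine Or.inl ⟨[], List.replicate a true ++ List.replicate b false, ?_⟩
                rw [List.replicate_succ]; simp
  
lemma valley_or (l : List Bool) :
    (∃ x y, l = x ++ true :: false :: y) ∨
      (∃ a b, l = List.replicate a false ++ List.replicate b true) := by
  induction l with
  | nil => exact Or.inr ⟨0, 0, rfl⟩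
  | cons c l ih =>
      rcases ih with ⟨x, y, rfl⟩ | ⟨a, b, rfl⟩
      · exact Or.inl ⟨c :: x, y, rfl⟩
      · cases c with
        | false =>
            exact Or.inr ⟨a + 1, b, by rw [List.replicate_succ]; simp⟩
        | true =>
            cases a with
            | zero =>
                exact Or.inr ⟨0, b + 1, by rw [List.replicate_succ]; simp⟩
            | succ a =>
                refine Or.inl ⟨[], List.replicate a false ++ List.replicate b true, ?_⟩
                rw [List.replicate_succ]; simp

lemma coeff_upper (m : ℕ) : ∀ N, m ≤ N → ∀ l : List Bool,
    l.count true = m → l.count false = m →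
    coeff l N ≤ ∏ i ∈ Finset.range m, ((N : ℝ) + 1 + i) := by
  induction m with
  | zero =>
      intro N _ l ht hf
      have : l = [] := by
        cases l with
        | nil => rfl
        | cons b l => cases b <;> simp [List.count_cons] at ht hf
      simp [this, coeff]
  | succ m ih =>
      intro N hN l ht hf
      rcases peak_or l with ⟨x, y, rfl⟩ | ⟨a, b, rfl⟩
      · have hxy_t : (x ++ y).count true = m := by
          simp [List.count_append, List.count_cons] at ht ⊢
          omega
        have hxy_f : (x ++ y).count false = m := by
          simp [List.count_append, List.count_cons] at hf ⊢
          omega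
        have hyt : y.count true ≤ m := by
          simp [List.count_append, List.count_cons] at ht
          omega
        have hyf : y.count false ≤ N + y.count true := by
          simp [List.count_append, List.count_cons] at hf
          omega
        rw [coeff_peak _ _ _ hyf, Finset.prod_range_succ]
        have hlvl : (lvl y N : ℝ) + 1 ≤ (N : ℝ) + 1 + m := by
          have : lvl y N ≤ N + m := by
            simp only [lvl]
            omega
          have := (Nat.cast_le (α := ℝ)).2 this
          push_cast at this ⊢
          linarith
        have hc := ih N (by omega) (x ++ y) hxy_t hxy_f
        have h0 : (0 : ℝ) ≤ coeff (x ++ y) N := coeff_nonneg _ _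
        calc ((lvl y N : ℝ) + 1) * coeff (x ++ y) N
            ≤ ((N : ℝ) + 1 + m) * (∏ i ∈ Finset.range m, ((N : ℝ) + 1 + i)) := by
              apply mul_le_mul hlvl hc h0 (by positivity)
          _ = (∏ i ∈ Finset.range m, ((N : ℝ) + 1 + i)) * ((N : ℝ) + 1 + m) := by ring
      · have ha : a = m + 1 := by
          simpa [List.count_append, List.count_replicate] using ht
        have hb : b = m + 1 := by
          simpa [List.count_append, List.count_replicate] using hf
        subst ha hb
        rw [coeff_valley_word _ _ hN]
        apply Finset.prod_le_prod
        · intro i hi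
          simp only [Finset.mem_range] at hi
          have : (i : ℝ) ≤ (N : ℝ) := by
            exact_mod_cast le_trans (by omega) hN
          linarith
        · intro i hi
          have : (0:ℝ) ≤ 1 + 2 * i := by positivity
          linarith

lemma coeff_lower (m : ℕ) : ∀ N, m ≤ N → ∀ l : List Bool,
    l.count true = m → l.count false = m →
    (∏ i ∈ Finset.range m, ((N : ℝ) - i)) ≤ coeff l N := by
  induction m with
  | zero =>
      intro N _ l ht hf
      have : l = [] := by
        cases l with
        | nil => rfl
        | cons b l => cases b <;> simp [List.count_cons] at ht hf
      simp [this, coeff]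
  | succ m ih =>
      intro N hN l ht hf
      rcases valley_or l with ⟨x, y, rfl⟩ | ⟨a, b, rfl⟩
      · have hxy_t : (x ++ y).count true = m := by
          simp [List.count_append, List.count_cons] at ht ⊢
          omega
        have hxy_f : (x ++ y).count false = m := by
          simp [List.count_append, List.count_cons] at hf ⊢
          omega
        have hyf : y.count false ≤ m := by
          simp [List.count_append, List.count_cons] at hf
          omega
        rw [coeff_valley, Finset.prod_range_succ]
        have hlvl : (N : ℝ) - m ≤ (lvl y N : ℝ) := by
          have h1 : N - m ≤ lvl y N := by
            simp only [lvl]; omega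
          have h2 := (Nat.cast_le (α := ℝ)).2 h1
          have h3 : ((N - m : ℕ) : ℝ) = (N : ℝ) - m := by
            have : m ≤ N := by omega
            push_cast [this]; ring
          linarith [h3 ▸ h2]
        have hc := ih N (by omega) (x ++ y) hxy_t hxy_f
        have hprod0 : (0 : ℝ) ≤ ∏ i ∈ Finset.range m, ((N : ℝ) - i) := by
          apply Finset.prod_nonneg
          intro i hi
          simp only [Finset.mem_range] at hi
          have : (i : ℝ) ≤ (N : ℝ) := by exact_mod_cast le_trans (by omega) hN
          linarith
        have hNm0 : (0:ℝ) ≤ (N:ℝ) - m := by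
          have : (m : ℝ) ≤ (N : ℝ) := by exact_mod_cast le_trans (by omega) hN
          linarith
        calc (∏ i ∈ Finset.range m, ((N : ℝ) - i)) * ((N : ℝ) - m)
            = ((N : ℝ) - m) * ∏ i ∈ Finset.range m, ((N : ℝ) - i) := by ring
          _ ≤ (lvl y N : ℝ) * coeff (x ++ y) N :=
              mul_le_mul hlvl hc hprod0 (le_trans hNm0 hlvl)
      · have ha : a = m + 1 := by
          simpa [List.count_append, List.count_replicate] using hf
        have hb : b = m + 1 := by
          simpa [List.count_append, List.count_replicate] using ht
        subst ha hb
        rw [coeff_peak_word]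
        apply Finset.prod_le_prod
        · intro i hi
          simp only [Finset.mem_range] at hi
          have : (i : ℝ) ≤ (N : ℝ) := by exact_mod_cast le_trans (by omega) hN
          linarith
        · intro i hi
          have : (0:ℝ) ≤ 1 + 2 * i := by positivity
          linarith

/-- applying a word (as a list) to a basis vector -/
lemma apply_list (l : List Bool) (n : ℕ)
    (h : ∀ s : List Bool, s <:+ l → s.count false ≤ n + s.count true) :
    ((l.map fun b => if b then cre else ann).foldr (· ∘ₗ ·) LinearMap.id) (e n)
      = coeff l n • e (lvl l n) := by
  induction l with
  | nil => simp [lvl_nil, coeff]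
  | cons b l ih =>
      have hl : ∀ s : List Bool, s <:+ l → s.count false ≤ n + s.count true := by
        intro s hs
        exact h s (hs.trans (List.suffix_cons b l))
      simp only [List.map_cons, List.foldr_cons, LinearMap.comp_apply, ih hl]
      cases b with
      | true =>
          have hc : cre (e (lvl l n)) = Real.sqrt ((lvl l n : ℝ) + 1) • e (lvl l n + 1) := by
            simp only [cre, e, Finsupp.lsum_single, LinearMap.smul_apply,
              Finsupp.lsingle_apply]
          rw [if_pos rfl, _root_.map_smul, hc, smul_smul,
            lvl_cons_true l n (hl l l.suffix_refl), coeff_cons, if_pos rfl, mul_comm]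
      | false =>
          have hc : ann (e (lvl l n)) = Real.sqrt ((lvl l n : ℝ)) • e (lvl l n - 1) := by
            simp only [ann, e, Finsupp.lsum_single, LinearMap.smul_apply,
              Finsupp.lsingle_apply]
          rw [if_neg (by simp), _root_.map_smul, hc, smul_smul,
            lvl_cons_false l n, coeff_cons, if_neg (by simp), mul_comm]

lemma count_ofFn {k : ℕ} : ∀ (f : Fin k → Bool) (b : Bool),
    (List.ofFn f).count b = (Finset.univ.filter fun i => f i = b).card := by
  induction k with
  | zero => intro f b; simp
  | succ k ih =>
      intro f b
      rw [List.ofFn_succ, List.count_cons, ih (fun i => f i.succ) b]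
      rw [Finset.card_filter, Finset.card_filter, Fin.sum_univ_succ]
      simp only [beq_iff_eq]
      rw [add_comm]

lemma innerF_eN_smul (N M : ℕ) (c : ℝ) :
    innerF (e N) (c • e M) = if M = N then c else 0 := by
  simp only [innerF, e]
  rw [Finsupp.sum_single_index (by simp)]
  simp only [Finsupp.smul_apply, Finsupp.single_apply, one_mul, smul_eq_mul]
  split <;> simp [*]

/-- For a balanced word `λ` of length `2m` and `N ≥ m`, the matrix element
`⟨e_N, a^λ e_N⟩` lies between the falling factorial `N⋯(N-m+1)` and the rising
factorial `(N+1)⋯(N+m)`. -/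
theorem balanced_word_bounds (m : ℕ) (lam : Fin (2 * m) → Bool)
    (htrue : (Finset.univ.filter fun i => lam i = true).card = m)
    (hfalse : (Finset.univ.filter fun i => lam i = false).card = m)
    (N : ℕ) (hN : m ≤ N) :
    (∏ i ∈ Finset.range m, ((N : ℝ) - i)) ≤ innerF (e N) (wordOp lam (e N)) ∧
    innerF (e N) (wordOp lam (e N)) ≤ ∏ i ∈ Finset.range m, ((N : ℝ) + 1 + i) := by
  set L := List.ofFn lam with hL
  have hmap : (List.ofFn fun i => if lam i then cre else ann)
      = L.map fun b => if b then cre else ann := by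
    rw [hL, List.map_ofFn]; rfl
  have hLt : L.count true = m := by rw [hL, count_ofFn]; exact htrue
  have hLf : L.count false = m := by rw [hL, count_ofFn]; exact hfalse
  have hsuf : ∀ s : List Bool, s <:+ L → s.count false ≤ N + s.count true := by
    intro s hs
    have := hs.sublist.count_le false
    omega
  have happ : wordOp lam (e N) = coeff L N • e (lvl L N) := by
    rw [wordOp, hmap]
    exact apply_list L N hsuf
  have hlvl : lvl L N = N := by simp [lvl, hLt, hLf]
  rw [happ, hlvl, innerF_eN_smul, if_pos rfl]
  exact ⟨coeff_lower m N hN L hLt hLf, coeff_upper m N hN L hLt hLf⟩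
end

section
/- Let m be a natural number and λ : Fin (2m) → Bool a balanced word (exactly m indices map to true and m to false). Then (1/N^m)·⟨e_N, a^λ e_N⟩ → 1 as N → ∞. -/
/-!
Each ladder operator maps `e n` to a multiple of `e (n ± 1)` with weight `√n` or `√(n + 1)`.
Along a word of length `k` applied to `e N` the index never leaves `[N - k, N + k]`, so the word
maps `e N` to `c • e (N + #a† - #a)` with `√(N - k) ^ k ≤ c ≤ √(N + k) ^ k`. A balanced word of
length `2m` returns to `e N`, hence `⟨e N, a^λ e N⟩ = c` lies between `(N - 2m) ^ m` and
`(N + 2m) ^ m`, and both bounds are `N ^ m (1 + O(1/N))`.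
-/

open MeasureTheory Filter

open Topology

lemma ann_e (n : ℕ) : ann (e n) = √n • e (n - 1) := by
  simp [ann, e, Finsupp.lsum_single]

lemma cre_e (n : ℕ) : cre (e n) = √(n + 1) • e (n + 1) := by
  simp [cre, e, Finsupp.lsum_single]

lemma innerF_e_smul_e (N : ℕ) (c : ℝ) : innerF (e N) (c • e N) = c := by
  simp [innerF, e, Finsupp.sum_single_index]

lemma sqrt_natCast_pow_le {a b : ℕ} (h : a ≤ b) (k : ℕ) : √(a : ℝ) ^ k ≤ √(b : ℝ) ^ k :=
  pow_le_pow_left₀ (Real.sqrt_nonneg _) (Real.sqrt_le_sqrt (by exact_mod_cast h)) k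

noncomputable def ladder (b : Bool) : (ℕ →₀ ℝ) →ₗ[ℝ] (ℕ →₀ ℝ) := if b then cre else ann

noncomputable def listWordOp (L : List Bool) : (ℕ →₀ ℝ) →ₗ[ℝ] (ℕ →₀ ℝ) :=
  (L.map ladder).foldr (· ∘ₗ ·) LinearMap.id

lemma listWordOp_cons (b : Bool) (L : List Bool) :
    listWordOp (b :: L) = ladder b ∘ₗ listWordOp L := rfl

lemma wordOp_eq_listWordOp {k : ℕ} (lam : Fin k → Bool) :
    wordOp lam = listWordOp (List.ofFn lam) := by
  rw [wordOp, listWordOp, List.map_ofFn]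
  rfl

lemma ladder_e (b : Bool) (n : ℕ) :
    ∃ w, ladder b (e n) = w • e (if b then n + 1 else n - 1) ∧ √(n : ℝ) ≤ w ∧ w ≤ √(n + 1 : ℝ) := by
  cases b
  · exact ⟨√n, ann_e n, le_rfl, Real.sqrt_le_sqrt (by linarith)⟩
  · exact ⟨√(n + 1), cre_e n, Real.sqrt_le_sqrt (by linarith), le_rfl⟩

lemma listWordOp_e (L : List Bool) {N : ℕ} (hN : L.length ≤ N) :
    ∃ c, listWordOp L (e N) = c • e (N + L.count true - L.count false) ∧
      √((N - L.length : ℕ) : ℝ) ^ L.length ≤ c ∧ c ≤ √((N + L.length : ℕ) : ℝ) ^ L.length := by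
  induction L with
  | nil => exact ⟨1, by simp [listWordOp], by simp, by simp⟩
  | cons b L ih =>
    rw [List.length_cons] at hN ⊢
    obtain ⟨c, hc, hc_low, hc_up⟩ := ih (by omega)
    obtain ⟨w, hw, hw_low, hw_up⟩ := ladder_e b (N + L.count true - L.count false)
    have hcount := L.count_true_add_count_false
    have hn : N - (L.length + 1) ≤ N + L.count true - L.count false ∧
        N + L.count true - L.count false + 1 ≤ N + (L.length + 1) := by
      omega
    refine ⟨w * c, ?_, ?_, ?_⟩
    · rw [listWordOp_cons, LinearMap.comp_apply, hc, map_smul, hw, smul_smul, mul_comm]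
      congr 2
      cases b <;>
        simp only [↓reduceIte, Bool.false_eq_true, Bool.true_eq_false, ne_eq, not_false_eq_true,
          List.count_cons_self, List.count_cons_of_ne] <;>
        omega
    · rw [pow_succ']
      refine mul_le_mul ((Real.sqrt_le_sqrt (by exact_mod_cast hn.1)).trans hw_low)
        ((sqrt_natCast_pow_le (by omega) _).trans hc_low) (by positivity)
        ((Real.sqrt_nonneg _).trans hw_low)
    · rw [pow_succ']
      refine mul_le_mul (hw_up.trans (Real.sqrt_le_sqrt (by exact_mod_cast hn.2)))
        (hc_up.trans (sqrt_natCast_pow_le (by omega) _))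
        ((by positivity : (0 : ℝ) ≤ _).trans hc_low) (Real.sqrt_nonneg _)

lemma innerF_wordOp_e_of_balanced {m : ℕ} (lam : Fin (2 * m) → Bool)
    (htrue : (Finset.univ.filter fun i => lam i = true).card = m) {N : ℕ} (hN : 2 * m ≤ N) :
    ((N : ℝ) - 2 * m) ^ m ≤ innerF (e N) (wordOp lam (e N)) ∧
      innerF (e N) (wordOp lam (e N)) ≤ ((N : ℝ) + 2 * m) ^ m := by
  set L := List.ofFn lam
  have hlen : L.length = 2 * m := List.length_ofFn
  have hct : L.count true = m := by
    simpa [htrue] using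
      (Fin.card_filter_univ_eq_vector_get_eq_count true (List.Vector.ofFn lam)).symm
  have hcf : L.count false = m := by
    have := L.count_true_add_count_false
    omega
  obtain ⟨c, hc, hc_low, hc_up⟩ := listWordOp_e L (hlen ▸ hN)
  rw [wordOp_eq_listWordOp, hc, hct, hcf, Nat.add_sub_cancel, innerF_e_smul_e]
  simp only [hlen, pow_mul, Real.sq_sqrt (Nat.cast_nonneg _)] at hc_low hc_up
  push_cast [hN] at hc_low hc_up
  exact ⟨hc_low, hc_up⟩

lemma tendsto_add_div_self_pow (d : ℝ) (m : ℕ) :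
    Tendsto (fun N : ℕ => ((N + d) / N) ^ m) atTop (𝓝 1) := by
  have h : Tendsto (fun N : ℕ => (1 + d / N) ^ m) atTop (𝓝 1) := by
    simpa using
      ((tendsto_const_nhds (x := (1 : ℝ))).add (tendsto_const_div_atTop_nhds_zero_nat d)).pow m
  refine h.congr' ?_
  filter_upwards [eventually_ne_atTop 0] with N hN
  rw [add_div, div_self (Nat.cast_ne_zero.mpr hN)]

theorem balanced_word_normalized_limit_general (m : ℕ) (lam : Fin (2 * m) → Bool)
    (htrue : (Finset.univ.filter fun i => lam i = true).card = m) :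
    Tendsto (fun N : ℕ => innerF (e N) (wordOp lam (e N)) / (N : ℝ) ^ m)
      atTop (nhds 1) := by
  have h_low := tendsto_add_div_self_pow (-(2 * m)) m
  simp only [← sub_eq_add_neg] at h_low
  refine tendsto_of_tendsto_of_tendsto_of_le_of_le' h_low (tendsto_add_div_self_pow (2 * m) m) ?_ ?_
  all_goals
    filter_upwards [eventually_ge_atTop (2 * m)] with N hN
    rw [div_pow]
    gcongr
  exacts [(innerF_wordOp_e_of_balanced lam htrue hN).1,
    (innerF_wordOp_e_of_balanced lam htrue hN).2]

/-- For a balanced word `λ` of length `2m`, `(1/N^m)·⟨e_N, a^λ e_N⟩ → 1` as `N → ∞`. -/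
theorem balanced_word_normalized_limit (m : ℕ) (lam : Fin (2 * m) → Bool)
    (htrue : (Finset.univ.filter fun i => lam i = true).card = m)
    (hfalse : (Finset.univ.filter fun i => lam i = false).card = m) :
    Tendsto (fun N : ℕ => innerF (e N) (wordOp lam (e N)) / (N : ℝ) ^ m)
      atTop (nhds 1) :=
  balanced_word_normalized_limit_general m lam htrue
end

section
/- For all natural numbers m and N with N ≥ m, ⟨e_N, (a†)^m ∘ a^m e_N⟩ = N·(N−1)···(N−m+1) (the falling factorial N!/(N−m)!). This word realizes the minimum value of ⟨e_N, a^λ e_N⟩ over balanced words λ of length 2m. -/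
open MeasureTheory Filter

namespace CAHelper

lemma ann_e (k : ℕ) : ann (e k) = Real.sqrt k • e (k-1) := by
  simp [ann, e, Finsupp.lsum_single, Finsupp.smul_single]

lemma cre_e (k : ℕ) : cre (e k) = Real.sqrt (k+1) • e (k+1) := by
  simp [cre, e, Finsupp.lsum_single, Finsupp.smul_single]

lemma innerF_eN (N : ℕ) (v : ℕ →₀ ℝ) : innerF (e N) v = v N := by
  simp [innerF, e, Finsupp.sum_single_index]

def step (b : Bool) (n : ℕ) : ℕ := if b then n+1 else n-1
noncomputable def wt (b : Bool) (n : ℕ) : ℝ := if b then Real.sqrt (n+1) else Real.sqrt n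

def idx : List Bool → ℕ → ℕ
| [], n => n
| b :: t, n => step b (idx t n)

noncomputable def coeff : List Bool → ℕ → ℝ
| [], _ => 1
| b :: t, n => wt b (idx t n) * coeff t n

lemma op_e (b : Bool) (k : ℕ) : (if b then cre else ann) (e k) = wt b k • e (step b k) := by
  cases b <;> simp [wt, step, ann_e, cre_e]

lemma foldr_apply (L : List Bool) (n : ℕ) :
    ((L.map fun b => if b then cre else ann).foldr (· ∘ₗ ·) LinearMap.id) (e n)
      = coeff L n • e (idx L n) := by
  induction L with
  | nil => simp [coeff, idx]
  | cons b t ih =>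
    rw [List.map_cons, List.foldr_cons, LinearMap.comp_apply, ih, LinearMap.map_smul,
      op_e, smul_smul]
    simp [coeff, idx, mul_comm]

lemma wordOp_apply {k : ℕ} (lam : Fin k → Bool) (n : ℕ) :
    wordOp lam (e n) = coeff (List.ofFn lam) n • e (idx (List.ofFn lam) n) := by
  rw [wordOp, ← foldr_apply]
  congr 1
  rw [List.map_ofFn]
  rfl

lemma wt_nonneg (b : Bool) (n : ℕ) : 0 ≤ wt b n := by
  cases b <;> simp [wt, Real.sqrt_nonneg]

lemma coeff_nonneg (L : List Bool) (n : ℕ) : 0 ≤ coeff L n := by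
  induction L with
  | nil => norm_num [coeff]
  | cons b t ih => exact mul_nonneg (wt_nonneg _ _) ih

lemma idx_append (A B : List Bool) (n : ℕ) : idx (A ++ B) n = idx A (idx B n) := by
  induction A with
  | nil => rfl
  | cons b t ih => simp [idx, ih]

lemma coeff_append (A B : List Bool) (n : ℕ) :
    coeff (A ++ B) n = coeff A (idx B n) * coeff B n := by
  induction A with
  | nil => simp [coeff]
  | cons b t ih => simp [coeff, ih, idx_append, mul_assoc]

/-- inversion measure -/
def mu : List Bool → ℕ
| [] => 0
| b :: t => mu t + (if b then 0 else t.count true)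

lemma mu_append (A B : List Bool) :
    mu (A ++ B) = mu A + A.count false * B.count true + mu B := by
  induction A with
  | nil => simp [mu]
  | cons b t ih =>
    cases b <;> simp [mu, ih, List.count_cons, List.count_append] <;> ring

lemma structure_or (L : List Bool) :
    (∃ A B, L = A ++ false :: true :: B) ∨
    L = List.replicate (L.count true) true ++ List.replicate (L.count false) false := by
  induction L with
  | nil => right; simp
  | cons b t ih =>
    rcases ih with ⟨A, B, rfl⟩ | h
    · left; exact ⟨b :: A, B, rfl⟩
    · cases b with
      | true =>
        right
        simp only [List.count_cons]
        simp [List.replicate_succ]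
        conv_lhs => rw [h]
      | false =>
        rcases Nat.eq_zero_or_pos (t.count true) with h0 | hpos
        · right
          simp only [List.count_cons, h0]
          simp [List.replicate_succ]
          conv_lhs => rw [h, h0]
          simp
        · left
          refine ⟨[], List.replicate (t.count true - 1) true ++ List.replicate (t.count false) false, ?_⟩
          conv_lhs => rw [h]
          have : t.count true = (t.count true - 1) + 1 := by omega
          rw [this, List.replicate_succ]
          simp

lemma swap_le (A B : List Bool) (n : ℕ) :
    coeff (A ++ true :: false :: B) n ≤ coeff (A ++ false :: true :: B) n := by
  set k := idx B n with hk
  rcases Nat.eq_zero_or_pos k with h0 | hpos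
  · have : coeff (true :: false :: B) n = 0 := by
      simp [coeff, idx, step, wt, h0, ← hk]
    rw [coeff_append, this, mul_zero]
    exact coeff_nonneg _ _
  · rw [coeff_append, coeff_append]
    have hidx1 : idx (false :: true :: B) n = k := by simp [idx, step, ← hk]
    have hidx2 : idx (true :: false :: B) n = k := by
      simp [idx, step, ← hk]; omega
    rw [hidx1, hidx2]
    apply mul_le_mul_of_nonneg_left _ (coeff_nonneg A k)
    have hc1 : ((k - 1 : ℕ) : ℝ) = (k : ℝ) - 1 := by
      rw [Nat.cast_sub hpos]; norm_num
    have c1 : coeff (false :: true :: B) n = ((k : ℝ) + 1) * coeff B n := by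
      have h5 : coeff (false :: true :: B) n
          = Real.sqrt ((k : ℝ) + 1) * (Real.sqrt ((k : ℝ) + 1) * coeff B n) := by
        simp [coeff, wt, idx, step, ← hk]
      rw [h5, ← mul_assoc, Real.mul_self_sqrt (by positivity)]
    have c2 : coeff (true :: false :: B) n = (k : ℝ) * coeff B n := by
      have h5 : coeff (true :: false :: B) n
          = Real.sqrt (((k - 1 : ℕ) : ℝ) + 1) * (Real.sqrt (k : ℝ) * coeff B n) := by
        simp [coeff, wt, idx, step, ← hk]
      rw [h5, hc1]
      have : (k : ℝ) - 1 + 1 = (k : ℝ) := by ring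
      rw [this, ← mul_assoc, Real.mul_self_sqrt (by positivity)]
    rw [c1, c2]
    nlinarith [coeff_nonneg B n, Nat.cast_nonneg (α := ℝ) k]

lemma sorted_le : ∀ (μ : ℕ) (L : List Bool), mu L ≤ μ → ∀ n,
    coeff (List.replicate (L.count true) true ++ List.replicate (L.count false) false) n
      ≤ coeff L n := by
  intro μ
  induction μ with
  | zero =>
    intro L hL n
    rcases structure_or L with ⟨A, B, rfl⟩ | h
    · exfalso
      rw [mu_append] at hL
      simp only [mu, List.count_cons] at hL
      simp at hL
    · conv_rhs => rw [h]
  | succ μ ih =>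
    intro L hL n
    rcases structure_or L with ⟨A, B, rfl⟩ | h
    · set L' := A ++ true :: false :: B with hL'
      have hct : L'.count true = (A ++ false :: true :: B).count true := by
        simp [hL', List.count_append, List.count_cons]
      have hcf : L'.count false = (A ++ false :: true :: B).count false := by
        simp [hL', List.count_append, List.count_cons]
      have hmu : mu L' + 1 = mu (A ++ false :: true :: B) := by
        rw [hL', mu_append, mu_append]
        simp [mu, List.count_cons]
        ring
      have hmu' : mu L' ≤ μ := by omega
      calc coeff (List.replicate ((A ++ false :: true :: B).count true) true ++
              List.replicate ((A ++ false :: true :: B).count false) false) n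
          = coeff (List.replicate (L'.count true) true ++
              List.replicate (L'.count false) false) n := by rw [hct, hcf]
        _ ≤ coeff L' n := ih L' hmu' n
        _ ≤ coeff (A ++ false :: true :: B) n := swap_le A B n
    · conv_rhs => rw [h]

lemma idx_replicate_false (m k : ℕ) : idx (List.replicate m false) k = k - m := by
  induction m with
  | zero => simp [idx]
  | succ m ih => rw [List.replicate_succ]; simp [idx, step, ih]; omega

lemma idx_replicate_true (m k : ℕ) : idx (List.replicate m true) k = k + m := by
  induction m with
  | zero => simp [idx]
  | succ m ih => rw [List.replicate_succ]; simp [idx, step, ih]; omega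

lemma coeff_replicate_false (m k : ℕ) :
    coeff (List.replicate m false) k = ∏ i ∈ Finset.range m, Real.sqrt ((k - i : ℕ)) := by
  induction m with
  | zero => simp [coeff]
  | succ m ih =>
    rw [List.replicate_succ, Finset.prod_range_succ]
    simp [coeff, wt, idx_replicate_false, ih, mul_comm]

lemma coeff_replicate_true (m k : ℕ) :
    coeff (List.replicate m true) k = ∏ i ∈ Finset.range m, Real.sqrt ((k + i + 1 : ℕ)) := by
  induction m with
  | zero => simp [coeff]
  | succ m ih =>
    rw [List.replicate_succ, Finset.prod_range_succ]
    simp only [coeff, wt, if_pos, idx_replicate_true, ih]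
    push_cast
    ring

lemma prod_reflect (m N : ℕ) (hN : m ≤ N) :
    (∏ i ∈ Finset.range m, Real.sqrt (((N - m) + i + 1 : ℕ)))
      = ∏ i ∈ Finset.range m, Real.sqrt ((N - i : ℕ)) := by
  rw [← Finset.prod_range_reflect (fun i => Real.sqrt ((N - i : ℕ))) m]
  apply Finset.prod_congr rfl
  intro i hi
  rw [Finset.mem_range] at hi
  congr 2
  omega

lemma sorted_value (m N : ℕ) (hN : m ≤ N) :
    coeff (List.replicate m true ++ List.replicate m false) N
      = ∏ i ∈ Finset.range m, ((N : ℝ) - i) := by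
  rw [coeff_append, idx_replicate_false, coeff_replicate_true, coeff_replicate_false,
    prod_reflect m N hN, ← Finset.prod_mul_distrib]
  apply Finset.prod_congr rfl
  intro i hi
  rw [Finset.mem_range] at hi
  rw [Real.mul_self_sqrt (by positivity), Nat.cast_sub (by omega : i ≤ N)]

lemma annPow (m k : ℕ) :
    (ann ^ m) (e k) = (∏ i ∈ Finset.range m, Real.sqrt ((k - i : ℕ))) • e (k - m) := by
  induction m generalizing k with
  | zero => simp
  | succ m ih =>
    rw [pow_succ, Module.End.mul_apply, ann_e, LinearMap.map_smul, ih, Finset.prod_range_succ',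
      smul_smul]
    have h1 : ∀ i, k - 1 - i = k - (i + 1) := by omega
    have h2 : k - 1 - m = k - (m + 1) := by omega
    simp only [h1, h2, Nat.cast_zero]
    rw [mul_comm]
    norm_num

lemma crePow (m k : ℕ) :
    (cre ^ m) (e k) = (∏ i ∈ Finset.range m, Real.sqrt ((k + i + 1 : ℕ))) • e (k + m) := by
  induction m generalizing k with
  | zero => simp
  | succ m ih =>
    rw [pow_succ, Module.End.mul_apply, cre_e, LinearMap.map_smul, ih, Finset.prod_range_succ',
      smul_smul]
    have h1 : ∀ i, k + 1 + i + 1 = k + (i + 1) + 1 := by omega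
    have h2 : k + 1 + m = k + (m + 1) := by omega
    simp only [h1, h2, Nat.cast_zero]
    rw [mul_comm]
    norm_num

lemma part1 (m N : ℕ) (hN : m ≤ N) :
    innerF (e N) (((cre ^ m) ∘ₗ (ann ^ m)) (e N)) = ∏ i ∈ Finset.range m, ((N : ℝ) - i) := by
  rw [LinearMap.comp_apply, annPow, LinearMap.map_smul, crePow]
  have h : N - m + m = N := by omega
  rw [h, innerF_eN]
  have : ∀ x : ℝ, (x • e N) N = x := by
    intro x; simp [e, Finsupp.single_apply]
  rw [smul_smul, this, prod_reflect m N hN, ← Finset.prod_mul_distrib]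
  apply Finset.prod_congr rfl
  intro i hi
  rw [Finset.mem_range] at hi
  rw [Real.mul_self_sqrt (by positivity), Nat.cast_sub (by omega : i ≤ N)]

lemma count_ofFn {k : ℕ} (f : Fin k → Bool) (b : Bool) :
    (List.ofFn f).count b = (Finset.univ.filter fun i => f i = b).card := by
  induction k with
  | zero => simp
  | succ k ih =>
    rw [List.ofFn_succ, List.count_cons, ih, Finset.card_filter, Finset.card_filter,
      Fin.sum_univ_succ]
    simp only [beq_iff_eq]
    exact add_comm _ _

lemma idx_int (L : List Bool) (N : ℕ) (h : L.count false ≤ N) :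
    (idx L N : ℤ) = N + L.count true - L.count false := by
  induction L with
  | nil => simp [idx]
  | cons b t ih =>
    cases b with
    | true =>
      simp only [List.count_cons] at h ⊢
      have hcf : t.count false ≤ N := by simp at h; omega
      have hit := ih hcf
      simp only [idx, step, if_pos]
      simp
      push_cast
      omega
    | false =>
      simp only [List.count_cons] at h ⊢
      have hcf : t.count false ≤ N := by simp at h; omega
      have hit := ih hcf
      simp only [idx, step, if_neg]
      simp at h ⊢
      omega

end CAHelper

/-- For `N ≥ m`, `⟨e_N, (a†)^m a^m e_N⟩` equals the falling factorial
`N·(N−1)⋯(N−m+1)`, and this is the minimum of `⟨e_N, a^λ e_N⟩` over balanced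
words `λ` of length `2m`. -/
theorem crePow_annPow_matrix_element (m N : ℕ) (hN : m ≤ N) :
    innerF (e N) (((cre ^ m) ∘ₗ (ann ^ m)) (e N)) = ∏ i ∈ Finset.range m, ((N : ℝ) - i) ∧
    ∀ lam : Fin (2 * m) → Bool,
      (Finset.univ.filter fun i => lam i = true).card = m →
      (Finset.univ.filter fun i => lam i = false).card = m →
      innerF (e N) (((cre ^ m) ∘ₗ (ann ^ m) : (ℕ →₀ ℝ) →ₗ[ℝ] ℕ →₀ ℝ) (e N)) ≤ innerF (e N) (wordOp lam (e N)) := by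
  constructor
  · exact CAHelper.part1 m N hN
  · intro lam ht hf
    rw [CAHelper.part1 m N hN, CAHelper.innerF_eN, CAHelper.wordOp_apply]
    set L := List.ofFn lam with hL
    have hct : L.count true = m := by rw [hL, CAHelper.count_ofFn]; exact ht
    have hcf : L.count false = m := by rw [hL, CAHelper.count_ofFn]; exact hf
    have hidx : CAHelper.idx L N = N := by
      have h2 := CAHelper.idx_int L N (by omega)
      rw [hct, hcf] at h2; omega
    rw [hidx]
    have heval : ∀ x : ℝ, (x • e N) N = x := by
      intro x; simp [e, Finsupp.single_apply]
    rw [heval]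
    calc ∏ i ∈ Finset.range m, ((N:ℝ) - i)
        = CAHelper.coeff (List.replicate m true ++ List.replicate m false) N :=
          (CAHelper.sorted_value m N hN).symm
      _ ≤ CAHelper.coeff L N := by
          have h3 := CAHelper.sorted_le (CAHelper.mu L) L le_rfl N
          rwa [hct, hcf] at h3
end

section
/- For every natural number m, the 2m-th moment of the normalized arcsine law equals (1/2^m)·(2m choose m), i.e. ∫_{−√2}^{√2} x^(2m) / (π·√(2 − x²)) dx = (1/2^m)·(2m choose m). -/
/-!
Substituting `x = √2 sin θ` turns the arcsine law into the uniform law `dθ / π` on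
`(-π/2, π/2)`, so the `2m`-th moment is `(2^m / π) ∫ sin^(2m)`. As `sin^(2m)` is `π`-periodic,
this is Wallis' integral over `[0, π]`, whose product formula is `π · centralBinom m / 4^m`.
-/

open MeasureTheory Real Set

lemma prod_odd_div_even_eq_centralBinom_div_four_pow (n : ℕ) :
    ∏ i ∈ Finset.range n, (2 * (i : ℝ) + 1) / (2 * i + 2) = n.centralBinom / 4 ^ n := by
  induction n with
  | zero => simp
  | succ n ih =>
    have h := congrArg (Nat.cast : ℕ → ℝ) (Nat.succ_mul_centralBinom_succ n)
    push_cast at h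
    rw [Finset.prod_range_succ, ih, pow_succ]
    field_simp
    linear_combination (-2) * h

lemma periodic_sin_pow_two_mul (n : ℕ) : Function.Periodic (fun x => sin x ^ (2 * n)) π :=
  fun x => by simp only [sin_add_pi, pow_mul, neg_sq]

theorem integral_sin_pow_two_mul_add_pi (n : ℕ) (t : ℝ) :
    ∫ x in t..t + π, sin x ^ (2 * n) = π * n.centralBinom / 4 ^ n := by
  rw [(periodic_sin_pow_two_mul n).intervalIntegral_add_eq t 0, zero_add, integral_sin_pow_even,
    prod_odd_div_even_eq_centralBinom_div_four_pow, mul_div_assoc]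

lemma image_const_mul_sin_Ioo {r : ℝ} (hr : 0 < r) :
    (fun θ => r * sin θ) '' Ioo (-(π / 2)) (π / 2) = Ioo (-r) r := by
  have hsin : sin '' Ioo (-(π / 2)) (π / 2) = Ioo (-1) 1 :=
    sinPartialHomeomorph.image_source_eq_target
  rw [← image_image (r * ·) sin, hsin, image_mul_left_Ioo hr]
  simp

lemma sqrt_sq_sub_mul_sin_sq {r θ : ℝ} (hr : 0 ≤ r) (hθ : θ ∈ Ioo (-(π / 2)) (π / 2)) :
    √(r ^ 2 - (r * sin θ) ^ 2) = r * cos θ := by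
  have hsq : r ^ 2 - (r * sin θ) ^ 2 = (r * cos θ) ^ 2 := by
    linear_combination (-r ^ 2) * sin_sq_add_cos_sq θ
  rw [hsq, sqrt_sq (mul_nonneg hr (cos_pos_of_mem_Ioo hθ).le)]

theorem integral_div_sqrt_sq_sub_sq {r : ℝ} (hr : 0 < r) (f : ℝ → ℝ) :
    ∫ x in -r..r, f x / √(r ^ 2 - x ^ 2) = ∫ θ in -(π / 2)..π / 2, f (r * sin θ) := by
  have hderiv : ∀ θ ∈ Ioo (-(π / 2)) (π / 2),
      HasDerivWithinAt (fun θ => r * sin θ) (r * cos θ) (Ioo (-(π / 2)) (π / 2)) θ :=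
    fun θ _ => ((hasDerivAt_sin θ).const_mul r).hasDerivWithinAt
  have hinj : InjOn (fun θ => r * sin θ) (Ioo (-(π / 2)) (π / 2)) :=
    fun a ha b hb h => injOn_sin (Ioo_subset_Icc_self ha) (Ioo_subset_Icc_self hb)
      (mul_left_cancel₀ hr.ne' h)
  rw [intervalIntegral.integral_of_le (by linarith), integral_Ioc_eq_integral_Ioo,
    ← image_const_mul_sin_Ioo hr,
    integral_image_eq_integral_abs_deriv_smul measurableSet_Ioo hderiv hinj,
    intervalIntegral.integral_of_le (by linarith [pi_pos]), integral_Ioc_eq_integral_Ioo]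
  refine setIntegral_congr_fun measurableSet_Ioo fun θ hθ => ?_
  have hcos : 0 < r * cos θ := mul_pos hr (cos_pos_of_mem_Ioo hθ)
  rw [sqrt_sq_sub_mul_sin_sq hr.le hθ, smul_eq_mul, abs_of_pos hcos, mul_div_cancel₀ _ hcos.ne']

/-- The `2m`-th moment of the normalized arcsine law equals `(1/2^m)·(2m choose m)`. -/
theorem arcsine_even_moment (m : ℕ) :
    ∫ x in (-Real.sqrt 2)..(Real.sqrt 2),
      x ^ (2 * m) / (Real.pi * Real.sqrt (2 - x ^ 2)) =
    (Nat.choose (2 * m) m : ℝ) / 2 ^ m := by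
  have h2 : √2 ^ 2 = 2 := sq_sqrt zero_le_two
  calc ∫ x in -√2..√2, x ^ (2 * m) / (π * √(2 - x ^ 2))
      = π⁻¹ * ∫ x in -√2..√2, x ^ (2 * m) / √(√2 ^ 2 - x ^ 2) := by
        rw [h2, ← intervalIntegral.integral_const_mul]
        congr 1; funext x; ring
    _ = π⁻¹ * 2 ^ m * ∫ θ in -(π / 2)..-(π / 2) + π, sin θ ^ (2 * m) := by
        rw [integral_div_sqrt_sq_sub_sq (by positivity), show -(π / 2) + π = π / 2 by ring,
          mul_assoc, ← intervalIntegral.integral_const_mul (2 ^ m : ℝ)]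
        simp only [mul_pow, pow_mul, h2]
    _ = (Nat.choose (2 * m) m : ℝ) / 2 ^ m := by
        rw [integral_sin_pow_two_mul_add_pi, Nat.centralBinom_eq_two_mul_choose,
          show (4 : ℝ) ^ m = 2 ^ m * 2 ^ m by rw [← mul_pow]; norm_num]
        field_simp
end

section
/- The moment problem for the normalized arcsine law is determinate: if μ is a probability measure on ℝ such that for every natural number n, ∫ x^n dμ(x) = M_n where M_{2m+1} = 0 and M_{2m} = (1/2^m)·(2m choose m), then μ equals the normalized arcsine law μ_As. -/
/-!
The prescribed even moments satisfy `(2m choose m) / 2^m ≤ 2^m = √2^(2m)`, so Chebyshev's inequality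
for the powers `x^(2m)` forces `μ` to be carried by `[-√2, √2]`. The substitution `x = √2 cos θ`
turns the moments of the arcsine law into the Wallis integrals `(√2)^n/π · ∫₀^π cos^n θ dθ`, which
are the prescribed ones. Finally, two finite measures carried by a compact interval with the same
moments integrate every polynomial alike, hence by Weierstrass approximation every continuous
function, and so they are equal.
-/

open MeasureTheory

noncomputable def arcsineLaw : Measure ℝ :=
  (volume.restrict (Set.Ioo (-Real.sqrt 2) (Real.sqrt 2))).withDensity
    fun x => ENNReal.ofReal (1 / (Real.pi * Real.sqrt (2 - x ^ 2)))

open Set Filter Topology Real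
open scoped Polynomial

namespace MeasureTheory

variable {μ ν : Measure ℝ}

section CompactSupport

variable {a b : ℝ}

lemma integrable_of_ae_mem_Icc [IsFiniteMeasure μ] (hμ : ∀ᵐ x ∂μ, x ∈ Icc a b) {f : ℝ → ℝ}
    (hf : Continuous f) : Integrable f μ := by
  rw [← Measure.restrict_eq_self_of_ae_mem hμ]
  exact hf.continuousOn.integrableOn_Icc

lemma dist_integral_le_of_ae_mem_Icc [IsFiniteMeasure μ] (hμ : ∀ᵐ x ∂μ, x ∈ Icc a b)
    {f g : ℝ → ℝ} (hf : Continuous f) (hg : Continuous g) {ε : ℝ}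
    (hfg : ∀ x ∈ Icc a b, |f x - g x| < ε) :
    dist (∫ x, f x ∂μ) (∫ x, g x ∂μ) ≤ ε * μ.real univ := by
  rw [dist_eq_norm, ← integral_sub (integrable_of_ae_mem_Icc hμ hf)
    (integrable_of_ae_mem_Icc hμ hg)]
  refine norm_integral_le_of_norm_le_const ?_
  filter_upwards [hμ] with x hx using (hfg x hx).le

lemma integral_eval_eq_of_moments_eq [IsFiniteMeasure μ] [IsFiniteMeasure ν]
    (hμ : ∀ᵐ x ∂μ, x ∈ Icc a b) (hν : ∀ᵐ x ∂ν, x ∈ Icc a b)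
    (h : ∀ n : ℕ, ∫ x, x ^ n ∂μ = ∫ x, x ^ n ∂ν) (p : ℝ[X]) :
    ∫ x, p.eval x ∂μ = ∫ x, p.eval x ∂ν := by
  simp only [Polynomial.eval_eq_sum_range]
  rw [integral_finsetSum _ fun i _ => integrable_of_ae_mem_Icc hμ (by fun_prop),
    integral_finsetSum _ fun i _ => integrable_of_ae_mem_Icc hν (by fun_prop)]
  simp only [integral_const_mul, h]

theorem Measure.ext_of_moments_eq_of_ae_mem_Icc [IsFiniteMeasure μ] [IsFiniteMeasure ν]
    (hμ : ∀ᵐ x ∂μ, x ∈ Icc a b) (hν : ∀ᵐ x ∂ν, x ∈ Icc a b)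
    (h : ∀ n : ℕ, ∫ x, x ^ n ∂μ = ∫ x, x ^ n ∂ν) : μ = ν := by
  refine ext_of_forall_integral_eq_of_IsFiniteMeasure fun f => eq_of_forall_dist_le fun ε hε => ?_
  set C := μ.real univ + ν.real univ + 1
  have hC : 0 < C := by positivity
  obtain ⟨p, hpf⟩ := exists_polynomial_near_of_continuousOn a b f f.continuous.continuousOn
    (ε / C) (by positivity)
  have hfp : ∀ x ∈ Icc a b, |f x - p.eval x| < ε / C := fun x hx => by
    rw [abs_sub_comm]
    exact hpf x hx
  calc dist (∫ x, f x ∂μ) (∫ x, f x ∂ν)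
      ≤ dist (∫ x, f x ∂μ) (∫ x, p.eval x ∂μ) + dist (∫ x, p.eval x ∂ν) (∫ x, f x ∂ν) := by
        rw [integral_eval_eq_of_moments_eq hμ hν h p]
        exact dist_triangle _ _ _
    _ ≤ ε / C * μ.real univ + ε / C * ν.real univ := by
        gcongr
        · exact dist_integral_le_of_ae_mem_Icc hμ f.continuous p.continuous hfp
        · exact dist_integral_le_of_ae_mem_Icc hν p.continuous f.continuous hpf
    _ ≤ ε := by
        rw [← mul_add, div_mul_eq_mul_div, div_le_iff₀ hC]
        gcongr
        linarith

end CompactSupport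

section EvenMoments

variable [IsFiniteMeasure μ]

lemma pow_mul_measureReal_le_integral_even_pow {m : ℕ}
    (hint : Integrable (fun x => x ^ (2 * m)) μ) {c : ℝ} (hc : 0 ≤ c) :
    c ^ (2 * m) * μ.real {x | c ≤ |x|} ≤ ∫ x, x ^ (2 * m) ∂μ := by
  have hsub : {x : ℝ | c ≤ |x|} ⊆ {x | c ^ (2 * m) ≤ x ^ (2 * m)} := fun x hx => by
    rw [mem_ofPred_eq, ← (even_two_mul m).pow_abs x]
    exact pow_le_pow_left₀ hc hx _
  calc c ^ (2 * m) * μ.real {x | c ≤ |x|}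
      ≤ c ^ (2 * m) * μ.real {x | c ^ (2 * m) ≤ x ^ (2 * m)} := by
        gcongr
        finiteness
    _ ≤ ∫ x, x ^ (2 * m) ∂μ := mul_meas_ge_le_integral_of_nonneg
        (ae_of_all _ fun x => (even_two_mul m).pow_nonneg x) hint _

/-- By Chebyshev, `μ {c ≤ |x|} ≤ C (r / c) ^ (2 * m)` for every `m`, which tends to `0` when
`r < c`. -/
theorem ae_abs_le_of_integral_even_pow_le {C r : ℝ} (hr : 0 ≤ r)
    (hint : ∀ m : ℕ, Integrable (fun x => x ^ (2 * m)) μ)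
    (h : ∀ m : ℕ, ∫ x, x ^ (2 * m) ∂μ ≤ C * r ^ (2 * m)) : ∀ᵐ x ∂μ, |x| ≤ r := by
  have htail : ∀ c, r < c → μ {x | c ≤ |x|} = 0 := fun c hrc => by
    have hc : 0 < c := hr.trans_lt hrc
    have hbound : ∀ m : ℕ, μ.real {x | c ≤ |x|} ≤ C * ((r / c) ^ 2) ^ m := fun m => by
      rw [← pow_mul, div_pow, mul_div_assoc', le_div_iff₀ (by positivity), mul_comm]
      exact (pow_mul_measureReal_le_integral_even_pow (hint m) hc.le).trans (h m)
    have hlim : Tendsto (fun m : ℕ => C * ((r / c) ^ 2) ^ m) atTop (𝓝 0) := by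
      simpa using (tendsto_pow_atTop_nhds_zero_of_lt_one (by positivity)
        (pow_lt_one₀ (by positivity) ((div_lt_one hc).2 hrc) two_ne_zero)).const_mul C
    exact (measureReal_eq_zero_iff).1 <|
      le_antisymm (ge_of_tendsto' hlim hbound) measureReal_nonneg
  have hcut : ∀ n : ℕ, ∀ᵐ x ∂μ, |x| < r + 1 / (n + 1) := fun n => by
    rw [ae_iff]
    simpa only [not_lt] using htail _ (lt_add_of_pos_right r (by positivity))
  filter_upwards [ae_all_iff.2 hcut] with x hx
  refine le_of_forall_pos_lt_add fun ε hε => ?_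
  obtain ⟨n, hn⟩ := exists_nat_one_div_lt hε
  linarith [hx n]

end EvenMoments

end MeasureTheory

namespace Real

lemma integral_cos_pow_even_zero_pi (m : ℕ) :
    ∫ θ in 0..π, cos θ ^ (2 * m) = π * (2 * m).choose m / 4 ^ m := by
  induction m with
  | zero => simp
  | succ m ih =>
    have hrec : ((m : ℝ) + 1) * (2 * m + 2).choose (m + 1) =
        2 * (2 * m + 1) * (2 * m).choose m := by
      exact_mod_cast Nat.succ_mul_centralBinom_succ m
    rw [mul_add_one, integral_cos_pow, ih]
    simp only [sin_zero, sin_pi, mul_zero, sub_zero, zero_div, zero_add]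
    push_cast
    field_simp
    linear_combination (-2 * 4 ^ m : ℝ) * hrec

lemma integral_cos_pow_odd_zero_pi (m : ℕ) : ∫ θ in 0..π, cos θ ^ (2 * m + 1) = 0 := by
  induction m with
  | zero => simp
  | succ m ih =>
    rw [show 2 * (m + 1) + 1 = 2 * m + 1 + 2 by ring, integral_cos_pow, ih]
    simp

lemma image_mul_cos_Ioo_zero_pi {r : ℝ} (hr : 0 < r) :
    (fun θ => r * cos θ) '' Ioo 0 π = Ioo (-r) r := by
  have hcos : cos '' Ioo 0 π = Ioo (-1) 1 := cosPartialHomeomorph.image_source_eq_target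
  rw [← image_image (r * ·) cos, hcos, image_mul_left_Ioo hr, mul_neg_one, mul_one]

/-- The substitution `x = r cos θ`; no regularity of `g` is needed, so `g` may blow up at `± r`. -/
lemma setIntegral_Ioo_eq_setIntegral_mul_cos {r : ℝ} (hr : 0 < r) (g : ℝ → ℝ) :
    ∫ x in Ioo (-r) r, g x = ∫ θ in Ioo 0 π, r * sin θ * g (r * cos θ) := by
  rw [← image_mul_cos_Ioo_zero_pi hr, integral_image_eq_integral_abs_deriv_smul measurableSet_Ioo
    (fun θ _ => ((hasDerivAt_cos θ).const_mul r).hasDerivWithinAt)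
    ((mul_right_injective₀ hr.ne').comp_injOn (injOn_cos.mono Ioo_subset_Icc_self))]
  refine setIntegral_congr_fun measurableSet_Ioo fun θ hθ => ?_
  rw [mul_neg, abs_neg, abs_of_pos (mul_pos hr (sin_pos_of_mem_Ioo hθ)), smul_eq_mul]

end Real

lemma integral_pow_arcsineLaw (n : ℕ) :
    ∫ x, x ^ n ∂arcsineLaw = √2 ^ n / π * ∫ θ in 0..π, cos θ ^ n := by
  rw [arcsineLaw, integral_withDensity_eq_integral_toReal_smul (by fun_prop)
      (ae_of_all _ fun _ => ENNReal.ofReal_lt_top),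
    setIntegral_Ioo_eq_setIntegral_mul_cos (by positivity),
    intervalIntegral.integral_of_le pi_pos.le, integral_Ioc_eq_integral_Ioo, ← integral_const_mul]
  refine setIntegral_congr_fun measurableSet_Ioo fun θ hθ => ?_
  have hsin := sin_pos_of_mem_Ioo hθ
  have hroot : √(2 - (√2 * cos θ) ^ 2) = √2 * sin θ := by
    rw [show 2 - (√2 * cos θ) ^ 2 = (√2 * sin θ) ^ 2 by
      rw [mul_pow, mul_pow, sq_sqrt zero_le_two, sin_sq]; ring, sqrt_sq (by positivity)]
  rw [ENNReal.toReal_ofReal (by positivity), hroot, smul_eq_mul, mul_pow]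
  field_simp

lemma integral_even_pow_arcsineLaw (m : ℕ) :
    ∫ x, x ^ (2 * m) ∂arcsineLaw = (2 * m).choose m / 2 ^ m := by
  rw [integral_pow_arcsineLaw, integral_cos_pow_even_zero_pi, pow_mul, sq_sqrt zero_le_two,
    show (4 : ℝ) ^ m = 2 ^ m * 2 ^ m by rw [← mul_pow]; norm_num]
  field_simp

lemma integral_odd_pow_arcsineLaw (m : ℕ) : ∫ x, x ^ (2 * m + 1) ∂arcsineLaw = 0 := by
  rw [integral_pow_arcsineLaw, integral_cos_pow_odd_zero_pi, mul_zero]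

instance : IsProbabilityMeasure arcsineLaw := by
  have hmass := integral_even_pow_arcsineLaw 0
  simp only [mul_zero, pow_zero, integral_const, smul_eq_mul, mul_one, Nat.choose_self,
    Nat.cast_one, div_one] at hmass
  exact ⟨(ENNReal.toReal_eq_one_iff _).1 hmass⟩

lemma ae_mem_Icc_arcsineLaw : ∀ᵐ x ∂arcsineLaw, x ∈ Icc (-√2) √2 :=
  (withDensity_absolutelyContinuous _ _).ae_le <|
    (ae_restrict_mem measurableSet_Ioo).mono fun _ => mem_Icc_of_Ioo

/-- The moment problem for the normalized arcsine law is determinate: any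
probability measure on `ℝ` whose even moments are `(1/2^m)·(2m choose m)` and
whose odd moments vanish equals the normalized arcsine law. -/
theorem arcsine_moment_problem_determinate (μ : Measure ℝ) [IsProbabilityMeasure μ]
    (heven : ∀ m : ℕ, ∫ x, x ^ (2 * m) ∂μ = (Nat.choose (2 * m) m : ℝ) / 2 ^ m)
    (hodd : ∀ m : ℕ, ∫ x, x ^ (2 * m + 1) ∂μ = 0) :
    μ = arcsineLaw := by
  have hint (m : ℕ) : Integrable (fun x => x ^ (2 * m)) μ := by
    refine Integrable.of_integral_ne_zero ((heven m).trans_ne ?_)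
    have := Nat.choose_pos (show m ≤ 2 * m by omega)
    positivity
  have hbound (m : ℕ) : ∫ x, x ^ (2 * m) ∂μ ≤ 1 * √2 ^ (2 * m) := by
    rw [heven, one_mul, pow_mul, sq_sqrt zero_le_two, div_le_iff₀ (by positivity), ← mul_pow]
    exact_mod_cast (Nat.choose_le_two_pow _ _).trans_eq (by rw [pow_mul]; norm_num)
  have hsupp : ∀ᵐ x ∂μ, x ∈ Icc (-√2) √2 :=
    (ae_abs_le_of_integral_even_pow_le (sqrt_nonneg 2) hint hbound).mono fun _ => abs_le.1
  refine Measure.ext_of_moments_eq_of_ae_mem_Icc hsupp ae_mem_Icc_arcsineLaw fun n => ?_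
  obtain ⟨m, rfl | rfl⟩ := Nat.even_or_odd' n
  · rw [heven, integral_even_pow_arcsineLaw]
  · rw [hodd, integral_odd_pow_arcsineLaw]
end
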